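/- arXiv:2305.15490 — 2 statements merged into one kernel-verified Lean document; each statement's English description precedes it below -/
import Mathlib

section
/- Let g : ℝ^r → ℝ^n be a C² immersion and write, in index notation with G = Dg|_{q̃}, the map p(q̃, p̃) = (G⁺)ᵀ p̃ where G⁺ = (GᵀG)⁻¹Gᵀ. Then the matrix Gᵀ · D_{q̃} p(q̃, p̃) ∈ ℝ^{r×r} is symmetric, i.e., its skew-symmetric part vanishes; specifically (Gᵀ D_{q̃} p)_{ij} = -Σ_k ∂²g_k/∂q̃_i∂q̃_j · p_k(q̃, p̃). -/
open Matrix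

/-- The Jacobian matrix of a map between finite pi spaces over ℝ. -/
noncomputable def jacobian {κ ι : Type*} [Fintype κ] [DecidableEq κ] [Fintype ι]
    (f : (κ → ℝ) → (ι → ℝ)) (x : κ → ℝ) : Matrix ι κ ℝ :=
  fun i j => fderiv ℝ f x (Pi.single j 1) i

/-- Moore–Penrose inverse of a full-column-rank matrix. -/
noncomputable def mpinv {m k : Type*} [Fintype m] [Fintype k] [DecidableEq k]
    (A : Matrix m k ℝ) : Matrix k m ℝ :=
  (Aᵀ * A)⁻¹ * Aᵀ

/-! Since `Gᵀ (G⁺)ᵀ = (G⁺ G)ᵀ = 1`, the map `q ↦ G(q)ᵀ p(q)` is constantly `p̃`. Differentiating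
this identity gives `Gᵀ D p = -(D G)ᵀ p`, whose `(i, j)` entry `-∑ₖ ∂ⱼ∂ᵢ gₖ pₖ` is symmetric in
`i, j` by Schwarz's theorem. The map `p` is differentiable by Cramer's rule, the Gram matrix
`GᵀG` being invertible because `G` has full column rank. -/

namespace Matrix

variable {m n K : Type*} [Fintype m] [Fintype n] [DecidableEq n] [Field K]

theorem isUnit_det_of_rank_eq_card {A : Matrix n n K} (h : A.rank = Fintype.card n) :
    IsUnit A.det := by
  rw [← isUnit_iff_isUnit_det, ← mulVec_surjective_iff_isUnit]
  have : LinearMap.range A.mulVecLin = ⊤ :=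
    Submodule.eq_top_of_finrank_eq (by rw [← rank, h, Module.finrank_fintype_fun_eq_card])
  exact LinearMap.range_eq_top.1 this

theorem isUnit_det_transpose_mul_self [LinearOrder K] [IsStrictOrderedRing K] {A : Matrix m n K}
    (h : A.rank = Fintype.card n) : IsUnit (Aᵀ * A).det :=
  isUnit_det_of_rank_eq_card (by rw [rank_transpose_mul_self, h])

end Matrix

theorem mpinv_mul_self {m n : Type*} [Fintype m] [Fintype n] [DecidableEq n] {A : Matrix m n ℝ}
    (h : IsUnit (Aᵀ * A).det) : mpinv A * A = 1 := by
  rw [mpinv, Matrix.mul_assoc, nonsing_inv_mul _ h]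

section MatrixCalculus

variable {𝕜 E m : Type*} [NontriviallyNormedField 𝕜] [NormedAddCommGroup E] [NormedSpace 𝕜 E]
  [Fintype m] [DecidableEq m] {B : E → Matrix m m 𝕜} {x : E}

theorem DifferentiableAt.matrix_det (h : ∀ i j, DifferentiableAt 𝕜 (fun q => B q i j) x) :
    DifferentiableAt 𝕜 (fun q => (B q).det) x := by
  simp only [det_apply, Units.smul_def, zsmul_eq_mul]
  fun_prop

theorem DifferentiableAt.matrix_inv_apply (h : ∀ i j, DifferentiableAt 𝕜 (fun q => B q i j) x)
    (hB : IsUnit (B x).det) (i j : m) : DifferentiableAt 𝕜 (fun q => (B q)⁻¹ i j) x := by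
  have hadj : DifferentiableAt 𝕜 (fun q => (B q).adjugate i j) x := by
    simp only [adjugate_apply]
    refine DifferentiableAt.matrix_det fun a b => ?_
    by_cases hab : a = j <;> simp [updateRow_apply, hab, h]
  simp only [inv_def, Matrix.smul_apply, Ring.inverse_eq_inv', smul_eq_mul]
  exact ((DifferentiableAt.matrix_det h).inv hB.ne_zero).mul hadj

end MatrixCalculus

theorem DifferentiableAt.mpinv_apply {E m n : Type*} [NormedAddCommGroup E] [NormedSpace ℝ E]
    [Fintype m] [Fintype n] [DecidableEq n] {A : E → Matrix m n ℝ} {x : E}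
    (h : ∀ k i, DifferentiableAt ℝ (fun q => A q k i) x) (hA : IsUnit ((A x)ᵀ * A x).det)
    (i : n) (k : m) : DifferentiableAt ℝ (fun q => mpinv (A q) i k) x := by
  have hgram : ∀ a b, DifferentiableAt ℝ (fun q => ((A q)ᵀ * A q) a b) x := fun a b => by
    simp only [mul_apply, transpose_apply]
    exact DifferentiableAt.fun_sum fun l _ => (h l a).mul (h l b)
  simp only [mpinv, mul_apply, transpose_apply]
  exact DifferentiableAt.fun_sum fun l _ =>
    (DifferentiableAt.matrix_inv_apply hgram hA i l).mul (h k l)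

section Jacobian

variable {κ ι ρ : Type*} [Fintype κ] [DecidableEq κ] [Fintype ι]

theorem jacobian_apply_of_differentiableAt {f : (κ → ℝ) → ι → ℝ} {x : κ → ℝ}
    (hf : DifferentiableAt ℝ f x) (i : ι) (j : κ) :
    jacobian f x i j = fderiv ℝ (fun q => f q i) x (Pi.single j 1) := by
  rw [fderiv_apply hf]
  rfl

theorem transpose_mul_jacobian_of_transpose_mulVec_eq_const {G : (κ → ℝ) → Matrix ι ρ ℝ}
    {p : (κ → ℝ) → ι → ℝ} {c : ρ → ℝ} {x : κ → ℝ}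
    (hG : ∀ k i, DifferentiableAt ℝ (fun q => G q k i) x) (hp : DifferentiableAt ℝ p x)
    (hc : ∀ q, (G q)ᵀ *ᵥ p q = c) (i : ρ) (j : κ) :
    ((G x)ᵀ * jacobian p x) i j =
      -∑ k, fderiv ℝ (fun q => G q k i) x (Pi.single j 1) * p x k := by
  have hpk : ∀ k, DifferentiableAt ℝ (fun q => p q k) x := differentiableAt_pi.1 hp
  have hsum := HasFDerivAt.fun_sum (u := Finset.univ)
    fun k _ => (hG k i).hasFDerivAt.fun_mul (hpk k).hasFDerivAt
  have hconst : (fun q => ∑ k, G q k i * p q k) = fun _ => c i := by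
    funext q
    rw [← hc q]
    simp only [mulVec, dotProduct, transpose_apply]
  rw [hconst] at hsum
  have hzero := congrArg (· (Pi.single j 1)) ((hasFDerivAt_const (c i) x).unique hsum)
  simp only [_root_.zero_apply, _root_.sum_apply, _root_.add_apply, _root_.smul_apply,
    smul_eq_mul] at hzero
  rw [mul_apply, eq_neg_iff_add_eq_zero, hzero, ← Finset.sum_add_distrib]
  refine Finset.sum_congr rfl fun k _ => ?_
  rw [transpose_apply, jacobian_apply_of_differentiableAt hp]
  ring

end Jacobian

theorem fderiv_fderiv_apply_apply {E ι : Type*} [NormedAddCommGroup E] [NormedSpace ℝ E]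
    [Fintype ι] {g : E → ι → ℝ} {x : E} (hg : DifferentiableAt ℝ (fderiv ℝ g) x)
    (v w : E) (k : ι) :
    fderiv ℝ (fun q => fderiv ℝ g q v k) x w = fderiv ℝ (fderiv ℝ g) x w v k := by
  have hv : DifferentiableAt ℝ (fun q => fderiv ℝ g q v) x :=
    hg.clm_apply (differentiableAt_const v)
  rw [fderiv_apply hv k, fderiv_clm_apply hg (differentiableAt_const v)]
  simp

theorem MCL_momentum_term_symmetric (n r : ℕ)
    (g : (Fin r → ℝ) → (Fin n → ℝ)) (hg : ContDiff ℝ 2 g)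
    (himm : ∀ q : Fin r → ℝ, (jacobian g q).rank = r)
    (qr : Fin r → ℝ) (pr : Fin r → ℝ) :
    -- p(q̃, p̃) = (G⁺)ᵀ p̃ with G = Dg|_{q̃};  M = Gᵀ · D_{q̃} p
    (let p : (Fin r → ℝ) → (Fin n → ℝ) := fun q => (mpinv (jacobian g q))ᵀ *ᵥ pr
     let M : Matrix (Fin r) (Fin r) ℝ := (jacobian g qr)ᵀ * jacobian p qr
     Mᵀ = M ∧
       ∀ i j : Fin r, M i j =
         -∑ k : Fin n,
           (fderiv ℝ (fun q => fderiv ℝ g q (Pi.single i 1) k) qr (Pi.single j 1)) *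
             p qr k) := by
  intro p M
  have hDg : Differentiable ℝ (fderiv ℝ g) :=
    (hg.fderiv_right (m := 1) (by norm_num)).differentiable one_ne_zero
  have hG : ∀ q k i, DifferentiableAt ℝ (fun q => jacobian g q k i) q := fun q k i =>
    differentiableAt_pi.1 ((hDg q).clm_apply (differentiableAt_const _)) k
  have hgram : ∀ q, IsUnit ((jacobian g q)ᵀ * jacobian g q).det := fun q =>
    isUnit_det_transpose_mul_self (by rw [himm q, Fintype.card_fin])
  have hGp : ∀ q, (jacobian g q)ᵀ *ᵥ p q = pr := fun q => by
    rw [mulVec_mulVec, ← transpose_mul, mpinv_mul_self (hgram q), transpose_one, one_mulVec]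
  have hp : DifferentiableAt ℝ p qr := differentiableAt_pi.2 fun k => by
    simp only [p, mulVec, dotProduct, transpose_apply]
    exact DifferentiableAt.fun_sum fun i _ =>
      ((DifferentiableAt.mpinv_apply (hG qr) (hgram qr) i k).mul_const _)
  have hM : ∀ i j, M i j =
      -∑ k, fderiv ℝ (fun q => fderiv ℝ g q (Pi.single i 1) k) qr (Pi.single j 1) * p qr k :=
    transpose_mul_jacobian_of_transpose_mulVec_eq_const (hG qr) hp hGp
  have hsym := hg.contDiffAt.isSymmSndFDerivAt (x := qr) (by simp)
  refine ⟨?_, hM⟩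
  ext i j
  simp only [transpose_apply, hM, fderiv_fderiv_apply_apply (hDg qr), hsym (Pi.single i 1)]
end

section
/- Let V ∈ ℝ^{2n×2r} be a symplectic matrix with symplectic inverse V⁺ = J₂ᵣᵀVᵀJ₂ₙ, let y_ref ∈ ℝ^{2n}, and let H : ℝ^{2n} → ℝ be C¹. Define the reduced Hamiltonian H̃(ỹ) := H(y_ref + Vỹ). Then V⁺ J₂ₙ ∇H(y_ref + Vỹ) = J₂ᵣ ∇H̃(ỹ) for all ỹ ∈ ℝ^{2r}. -/
open Matrix

/-- The canonical symplectic matrix `J₂ₙ = [[0, Iₙ], [-Iₙ, 0]]`. -/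
noncomputable def symplJ (n : ℕ) : Matrix (Fin n ⊕ Fin n) (Fin n ⊕ Fin n) ℝ :=
  Matrix.fromBlocks 0 1 (-1) 0

/-- Gradient of a scalar function on a finite pi space over ℝ. -/
noncomputable def grad {ι : Type*} [Fintype ι] [DecidableEq ι]
    (H : (ι → ℝ) → ℝ) (y : ι → ℝ) : ι → ℝ :=
  fun i => fderiv ℝ H y (Pi.single i 1)

lemma symplJ_mul_self (n : ℕ) : symplJ n * symplJ n = -1 := by
  simp [symplJ, fromBlocks_multiply, fromBlocks_neg, ← fromBlocks_one]

lemma symplJ_transpose (n : ℕ) : (symplJ n)ᵀ = -symplJ n := by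
  simp [symplJ, fromBlocks_transpose, fromBlocks_neg]

lemma transpose_symplJ_mul_mul_symplJ_mul_symplJ (n r : ℕ)
    (A : Matrix (Fin r ⊕ Fin r) (Fin n ⊕ Fin n) ℝ) :
    (symplJ r)ᵀ * A * symplJ n * symplJ n = symplJ r * A := by
  rw [Matrix.mul_assoc, symplJ_mul_self, symplJ_transpose]
  simp

lemma fderiv_apply_eq_grad_dotProduct {ι : Type*} [Fintype ι] [DecidableEq ι]
    (H : (ι → ℝ) → ℝ) (y v : ι → ℝ) : fderiv ℝ H y v = grad H y ⬝ᵥ v := by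
  rw [← ContinuousLinearMap.coe_coe, LinearMap.pi_apply_eq_sum_univ, dotProduct_comm]
  refine Finset.sum_congr rfl fun i _ => ?_
  have hBasis : (fun j => if i = j then (1 : ℝ) else 0) = Pi.single i 1 := by
    ext j
    simp [Pi.single_apply, eq_comm]
  simp [grad, hBasis]

lemma grad_comp_affine {ι κ : Type*} [Fintype ι] [DecidableEq ι] [Fintype κ] [DecidableEq κ]
    (H : (ι → ℝ) → ℝ) (a : ι → ℝ) (A : Matrix ι κ ℝ) (x : κ → ℝ)
    (hH : DifferentiableAt ℝ H (a + A *ᵥ x)) :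
    grad (fun w => H (a + A *ᵥ w)) x = Aᵀ *ᵥ grad H (a + A *ᵥ x) := by
  have hAffine : HasFDerivAt (fun w => a + A *ᵥ w) (mulVecLin A).toContinuousLinearMap x :=
    (mulVecLin A).toContinuousLinearMap.hasFDerivAt.const_add a
  have hComp : HasFDerivAt (fun w => H (a + A *ᵥ w))
      ((fderiv ℝ H (a + A *ᵥ x)).comp (mulVecLin A).toContinuousLinearMap) x :=
    hH.hasFDerivAt.comp x hAffine
  ext i
  rw [grad, hComp.fderiv]
  simp only [ContinuousLinearMap.coe_comp, Function.comp_apply, LinearMap.coe_toContinuousLinearMap',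
    mulVecLin_apply, mulVec_single_one, fderiv_apply_eq_grad_dotProduct, dotProduct_comm]
  rfl

theorem symplectic_galerkin_reduced_hamiltonian_general (n r : ℕ)
    (V : Matrix (Fin n ⊕ Fin n) (Fin r ⊕ Fin r) ℝ)
    (yref : Fin n ⊕ Fin n → ℝ)
    (H : (Fin n ⊕ Fin n → ℝ) → ℝ) (hH : ContDiff ℝ 1 H)
    (yr : Fin r ⊕ Fin r → ℝ) :
    ((symplJ r)ᵀ * Vᵀ * symplJ n) *ᵥ (symplJ n *ᵥ grad H (yref + V *ᵥ yr)) =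
      symplJ r *ᵥ grad (fun w => H (yref + V *ᵥ w)) yr := by
  rw [grad_comp_affine H yref V yr (hH.differentiable one_ne_zero _), mulVec_mulVec,
    mulVec_mulVec, transpose_symplJ_mul_mul_symplJ_mul_symplJ]

theorem symplectic_galerkin_reduced_hamiltonian (n r : ℕ)
    (V : Matrix (Fin n ⊕ Fin n) (Fin r ⊕ Fin r) ℝ)
    (hV : Vᵀ * symplJ n * V = symplJ r)
    (yref : Fin n ⊕ Fin n → ℝ)
    (H : (Fin n ⊕ Fin n → ℝ) → ℝ) (hH : ContDiff ℝ 1 H)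
    (yr : Fin r ⊕ Fin r → ℝ) :
    ((symplJ r)ᵀ * Vᵀ * symplJ n) *ᵥ (symplJ n *ᵥ grad H (yref + V *ᵥ yr)) =
      symplJ r *ᵥ grad (fun w => H (yref + V *ᵥ w)) yr :=
  symplectic_galerkin_reduced_hamiltonian_general n r V yref H hH yr
end
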